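/- Hennessy-Milner theorem for ▲: for image-finite pointed models (M,s) and (M',s'), they satisfy the same L(▲)-formulas if and only if they are ▲-bisimilar. -/

import Mathlib

structure Model where
  W : Type
  ne : Nonempty W
  R : W → W → Prop
  V : ℕ → W → Prop

/-- Disjoint union of two models. -/
def dsum (M N : Model) : Model where
  W := M.W ⊕ N.W
  ne := ⟨Sum.inl M.ne.some⟩
  R := fun a b =>
    match a, b with
    | .inl x, .inl y => M.R x y
    | .inr x, .inr y => N.R x y
    | _, _ => False
  V := fun n => Sum.elim (M.V n) (N.V n)

/-- Z is a ▲-bisimulation on the model M. -/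
def IsTriBisim (M : Model) (Z : M.W → M.W → Prop) : Prop :=
  (∃ a b, Z a b) ∧
  ∀ s s', Z s s' →
    (∀ n, M.V n s ↔ M.V n s') ∧
    (∀ t, M.R s t → ¬ Z s t → ∃ t', M.R s' t' ∧ Z t t') ∧
    (∀ t', M.R s' t' → ¬ Z s' t' → ∃ t, M.R s t ∧ Z t t')

/-- (M,s) and (N,t) are ▲-bisimilar. -/
def TriBisimilar (M : Model) (s : M.W) (N : Model) (t : N.W) : Prop :=
  ∃ Z, IsTriBisim (dsum M N) Z ∧ Z (.inl s) (.inr t)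

/-- The language L(▲). -/
inductive Formula where
  | atom : ℕ → Formula
  | top : Formula
  | neg : Formula → Formula
  | and : Formula → Formula → Formula
  | tri : Formula → Formula

/-- Satisfaction of L(▲)-formulas. -/
def sat (M : Model) : M.W → Formula → Prop
  | s, .atom n => M.V n s
  | _, .top => True
  | s, .neg φ => ¬ sat M s φ
  | s, .and φ ψ => sat M s φ ∧ sat M s ψ
  | s, .tri φ =>
      (sat M s φ → ∀ t, M.R s t → sat M t φ) ∧
      (¬ sat M s φ → ∀ t, M.R s t → ¬ sat M t φ)

/-- M is image-finite. -/
def ImageFinite (M : Model) : Prop := ∀ s, Set.Finite {t | M.R s t}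

/-!
`s ⊨ ▲φ` only says that `s` agrees on `φ` with each of its successors `t`, so a `▲`-bisimulation
preserves all formulas: if `(s, t) ∈ Z` the induction hypothesis already gives this agreement,
and otherwise the forth/back condition supplies a matching successor on the other side.

Conversely, on an image-finite model modal equivalence `≡` is itself a `▲`-bisimulation. If
`a ≡ b`, `a R t`, `t ≢ a` and no successor of `b` were equivalent to `t`, a finite conjunction
gives one formula `ψ` true at `t` and false at `a` and at every successor of `b`; then `a ⊭ ▲ψ`
while `b ⊨ ▲ψ`. Both pointed models are compared inside their disjoint union, whose two
embeddings are bounded morphisms and hence preserve truth.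
-/

theorem sat_tri_iff (M : Model) (s : M.W) (φ : Formula) :
    sat M s (.tri φ) ↔ ∀ t, M.R s t → (sat M s φ ↔ sat M t φ) := by
  by_cases h : sat M s φ <;> simp [sat, h]

structure IsBoundedMorphism (M N : Model) (f : M.W → N.W) : Prop where
  val_iff : ∀ n x, N.V n (f x) ↔ M.V n x
  rel_map : ∀ {x y}, M.R x y → N.R (f x) (f y)
  exists_rel_of_rel : ∀ {x u}, N.R (f x) u → ∃ y, M.R x y ∧ f y = u

theorem IsBoundedMorphism.sat_iff {M N : Model} {f : M.W → N.W} (hf : IsBoundedMorphism M N f)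
    (φ : Formula) (x : M.W) : sat N (f x) φ ↔ sat M x φ := by
  induction φ generalizing x with
  | atom n => exact hf.val_iff n x
  | top => exact Iff.rfl
  | neg φ ih => exact not_congr (ih x)
  | and φ ψ ihφ ihψ => exact and_congr (ihφ x) (ihψ x)
  | tri φ ih =>
    rw [sat_tri_iff, sat_tri_iff]
    constructor
    · intro h y hy
      rw [← ih x, ← ih y]
      exact h _ (hf.rel_map hy)
    · intro h u hu
      obtain ⟨y, hy, rfl⟩ := hf.exists_rel_of_rel hu
      rw [ih x, ih y]
      exact h y hy

theorem isBoundedMorphism_inl (M N : Model) : IsBoundedMorphism M (dsum M N) Sum.inl where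
  val_iff _ _ := Iff.rfl
  rel_map h := h
  exists_rel_of_rel := by
    rintro x (y | y) h
    · exact ⟨y, h, rfl⟩
    · exact h.elim

theorem isBoundedMorphism_inr (M N : Model) : IsBoundedMorphism N (dsum M N) Sum.inr where
  val_iff _ _ := Iff.rfl
  rel_map h := h
  exists_rel_of_rel := by
    rintro x (y | y) h
    · exact h.elim
    · exact ⟨y, h, rfl⟩

theorem ImageFinite.dsum {M N : Model} (hM : ImageFinite M) (hN : ImageFinite N) :
    ImageFinite (dsum M N) := by
  rintro (x | x)
  · refine ((hM x).image Sum.inl).subset ?_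
    rintro (y | y) h
    · exact ⟨y, h, rfl⟩
    · exact h.elim
  · refine ((hN x).image Sum.inr).subset ?_
    rintro (y | y) h
    · exact h.elim
    · exact ⟨y, h, rfl⟩

theorem IsTriBisim.sat_iff {K : Model} {Z : K.W → K.W → Prop} (hZ : IsTriBisim K Z)
    (φ : Formula) {a b : K.W} (hab : Z a b) : sat K a φ ↔ sat K b φ := by
  induction φ generalizing a b with
  | atom n => exact (hZ.2 a b hab).1 n
  | top => exact Iff.rfl
  | neg φ ih => exact not_congr (ih hab)
  | and φ ψ ihφ ihψ => exact and_congr (ihφ hab) (ihψ hab)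
  | tri φ ih =>
    rw [sat_tri_iff, sat_tri_iff]
    obtain ⟨-, forth, back⟩ := hZ.2 a b hab
    constructor
    · intro h u hu
      by_cases hbu : Z b u
      · exact ih hbu
      · obtain ⟨v, hv, hvu⟩ := back u hu hbu
        exact (ih hab).symm.trans ((h v hv).trans (ih hvu))
    · intro h u hu
      by_cases hau : Z a u
      · exact ih hau
      · obtain ⟨v, hv, huv⟩ := forth u hu hau
        exact (ih hab).trans ((h v hv).trans (ih huv).symm)

def ModalEquiv (K : Model) (a b : K.W) : Prop := ∀ φ, sat K a φ ↔ sat K b φ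

namespace ModalEquiv

variable {K : Model}

theorem symm {a b : K.W} (h : ModalEquiv K a b) : ModalEquiv K b a := fun φ => (h φ).symm

theorem exists_sat_not_sat {a b : K.W} (h : ¬ ModalEquiv K a b) :
    ∃ φ, sat K a φ ∧ ¬ sat K b φ := by
  obtain ⟨φ, hφ⟩ := not_forall.mp h
  by_cases ha : sat K a φ
  · exact ⟨φ, ha, fun hb => hφ (iff_of_true ha hb)⟩
  · exact ⟨.neg φ, ha, fun hb => hφ (iff_of_false ha hb)⟩

theorem exists_sat_forall_not_sat {x : K.W} {S : Set K.W} (hS : S.Finite)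
    (h : ∀ y ∈ S, ¬ ModalEquiv K x y) : ∃ ψ, sat K x ψ ∧ ∀ y ∈ S, ¬ sat K y ψ := by
  induction S, hS using Set.Finite.induction_on with
  | empty => exact ⟨.top, trivial, by simp⟩
  | @insert y S _ _ ih =>
    obtain ⟨ψ, hxψ, hSψ⟩ := ih fun z hz => h z (Set.mem_insert_of_mem y hz)
    obtain ⟨φ, hxφ, hyφ⟩ := exists_sat_not_sat (h y (Set.mem_insert y S))
    refine ⟨.and φ ψ, ⟨hxφ, hxψ⟩, ?_⟩
    rintro z (rfl | hz) ⟨hzφ, hzψ⟩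
    · exact hyφ hzφ
    · exact hSψ z hz hzψ

theorem exists_rel_modalEquiv (hK : ImageFinite K) {a b t : K.W} (hab : ModalEquiv K a b)
    (hat : K.R a t) (hta : ¬ ModalEquiv K a t) : ∃ t', K.R b t' ∧ ModalEquiv K t t' := by
  by_contra! hb
  obtain ⟨ψ, htψ, hψ⟩ := exists_sat_forall_not_sat ((hK b).insert a) <| by
    rintro y (rfl | hy)
    exacts [fun h => hta h.symm, hb y hy]
  have hbψ : ¬ sat K b ψ := fun h => hψ a (.inl rfl) ((hab ψ).2 h)
  have hb_tri : sat K b (.tri ψ) :=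
    (sat_tri_iff K b ψ).2 fun u hu => iff_of_false hbψ (hψ u (.inr hu))
  exact hψ a (.inl rfl) (((sat_tri_iff K a ψ).1 ((hab _).2 hb_tri) t hat).2 htψ)

theorem isTriBisim (hK : ImageFinite K) : IsTriBisim K (ModalEquiv K) := by
  refine ⟨⟨K.ne.some, K.ne.some, fun _ => Iff.rfl⟩, fun a b hab => ⟨fun n => hab (.atom n), ?_, ?_⟩⟩
  · exact fun t hat hta => exists_rel_modalEquiv hK hab hat hta
  · intro t hbt htb
    obtain ⟨t', hat', htt'⟩ := exists_rel_modalEquiv hK hab.symm hbt htb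
    exact ⟨t', hat', htt'.symm⟩

end ModalEquiv

theorem stmt15 (M N : Model) (s : M.W) (t : N.W)
    (hM : ImageFinite M) (hN : ImageFinite N) :
    (∀ φ : Formula, sat M s φ ↔ sat N t φ) ↔ TriBisimilar M s N t := by
  have sat_iff_dsum : (∀ φ, sat M s φ ↔ sat N t φ) ↔
      ModalEquiv (dsum M N) (.inl s) (.inr t) := forall_congr' fun φ => by
    rw [(isBoundedMorphism_inl M N).sat_iff, (isBoundedMorphism_inr M N).sat_iff]
  rw [sat_iff_dsum]
  constructor
  · exact fun h => ⟨_, ModalEquiv.isTriBisim (hM.dsum hN), h⟩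
  · rintro ⟨Z, hZ, hst⟩ φ
    exact hZ.sat_iff φ hst
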